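/- Let x : [0,T] → ℝ^n solve x'(t) = A x(t) + B u(t) + Σ_{i=1}^m N_i x(t) u_i(t) with x(0) = x₀, u continuous, and let Q₁ be symmetric positive semidefinite with Aᵀ Q₁ + Q₁ A + Σ_{i=1}^m N_iᵀ Q₁ N_i = −Cᵀ C. Then ∫₀ᵀ ‖C x(t)‖₂² dt ≤ x₀ᵀ Q₁ x₀ + 2∫₀ᵀ x(t)ᵀ Q₁ B u(t) dt + ∫₀ᵀ x(t)ᵀ Q₁ x(t) · ‖u(t)‖₂² dt. -/

import Mathlib

/-!
Take the storage function `V(t) = x(t)ᵀ Q₁ x(t)`, so `V' = 2 xᵀ Q₁ (A x + B u + Σ uᵢ Nᵢ x)`.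
Testing the Lyapunov equation against `x` turns the `A`-part into
`-‖C x‖² - Σ (Nᵢ x)ᵀ Q₁ (Nᵢ x)`, and positive semidefiniteness of `Q₁` bounds each cross term
`2 uᵢ xᵀ Q₁ Nᵢ x` by `(Nᵢ x)ᵀ Q₁ (Nᵢ x) + uᵢ² xᵀ Q₁ x`. Hence pointwise
`‖C x‖² + V' ≤ 2 xᵀ Q₁ B u + xᵀ Q₁ x ‖u‖²`; integrate over `[0, T]` and drop `V(T) ≥ 0`.
-/

open Matrix BigOperators MeasureTheory intervalIntegral

namespace Matrix

theorem PosSemidef.isSymm {n : Type*} {Q : Matrix n n ℝ} (hQ : Q.PosSemidef) : Q.IsSymm := by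
  simpa [IsSymm, conjTranspose_eq_transpose_of_trivial] using hQ.isHermitian.eq

variable {n : Type*} [Fintype n]

theorem IsSymm.dotProduct_mulVec_comm {R : Type*} [CommSemiring R] {Q : Matrix n n R}
    (hQ : Q.IsSymm) (v w : n → R) : v ⬝ᵥ Q *ᵥ w = w ⬝ᵥ Q *ᵥ v := by
  rw [dotProduct_mulVec, ← vecMul_transpose, hQ.eq, dotProduct_comm]

theorem PosSemidef.dotProduct_mulVec_self_nonneg {Q : Matrix n n ℝ} (hQ : Q.PosSemidef)
    (v : n → ℝ) : 0 ≤ v ⬝ᵥ Q *ᵥ v := by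
  simpa using hQ.dotProduct_mulVec_nonneg v

theorem PosSemidef.two_mul_dotProduct_mulVec_le {Q : Matrix n n ℝ} (hQ : Q.PosSemidef)
    (v w : n → ℝ) : 2 * (v ⬝ᵥ Q *ᵥ w) ≤ v ⬝ᵥ Q *ᵥ v + w ⬝ᵥ Q *ᵥ w := by
  have h := hQ.dotProduct_mulVec_self_nonneg (v - w)
  rw [sub_dotProduct, mulVec_sub, dotProduct_sub, dotProduct_sub,
    hQ.isSymm.dotProduct_mulVec_comm w v] at h
  linarith

end Matrix

section Deriv

variable {𝕜 : Type*} [NontriviallyNormedField 𝕜] {n : Type*} [Fintype n]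
  {f g : 𝕜 → n → 𝕜} {f' g' : n → 𝕜} {t : 𝕜}

theorem HasDerivAt.dotProduct (hf : HasDerivAt f f' t) (hg : HasDerivAt g g' t) :
    HasDerivAt (fun s => f s ⬝ᵥ g s) (f' ⬝ᵥ g t + f t ⬝ᵥ g') t := by
  simp only [_root_.dotProduct, ← Finset.sum_add_distrib]
  exact HasDerivAt.fun_sum fun i _ => (hasDerivAt_pi.1 hf i).mul (hasDerivAt_pi.1 hg i)

theorem HasDerivAt.matrix_mulVec {m : Type*} (Q : Matrix m n 𝕜) (hf : HasDerivAt f f' t) :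
    HasDerivAt (fun s => Q *ᵥ f s) (Q *ᵥ f') t :=
  hasDerivAt_pi.2 fun i => by
    simpa [mulVec] using (hasDerivAt_const t (Q i)).dotProduct hf

end Deriv

theorem HasDerivAt.dotProduct_mulVec_self {n : Type*} [Fintype n] {Q : Matrix n n ℝ}
    (hQ : Q.IsSymm) {f : ℝ → n → ℝ} {f' : n → ℝ} {t : ℝ} (hf : HasDerivAt f f' t) :
    HasDerivAt (fun s => f s ⬝ᵥ Q *ᵥ f s) (2 * (f t ⬝ᵥ Q *ᵥ f')) t := by
  refine (hf.dotProduct (hf.matrix_mulVec Q)).congr_deriv ?_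
  rw [hQ.dotProduct_mulVec_comm f' (f t)]
  ring

/-- The one-sided fundamental theorem of calculus used here needs no integrability of `V'`. -/
theorem integral_add_le_of_hasDerivAt {V V' f g : ℝ → ℝ} {a b : ℝ} (hab : a ≤ b)
    (hV : ∀ t ∈ Set.Icc a b, HasDerivAt V (V' t) t)
    (hf : IntervalIntegrable f volume a b) (hg : IntervalIntegrable g volume a b)
    (hle : ∀ t ∈ Set.Ioo a b, f t + V' t ≤ g t) :
    V b + ∫ t in a..b, f t ≤ V a + ∫ t in a..b, g t := by
  have h := sub_le_integral_of_hasDeriv_right_of_le hab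
    (fun t ht => (hV t ht).continuousAt.continuousWithinAt)
    (fun t ht => (hV t (Set.Ioo_subset_Icc_self ht)).hasDerivWithinAt)
    ((intervalIntegrable_iff_integrableOn_Icc_of_le hab).1 (hg.sub hf))
    (fun t ht => le_sub_iff_add_le'.2 (hle t ht))
  rw [integral_sub hg hf] at h
  linarith

section Lyapunov

variable {n m p : Type*} [Fintype n] [Fintype m] [Fintype p]
  {A Q : Matrix n n ℝ} {B : Matrix n m ℝ} {N : m → Matrix n n ℝ} {C : Matrix p n ℝ}

theorem quadForm_of_lyapunov_eq (hQ : Q.IsSymm)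
    (hLyap : Aᵀ * Q + Q * A + ∑ i, (N i)ᵀ * Q * N i = -(Cᵀ * C)) (v : n → ℝ) :
    2 * (v ⬝ᵥ Q *ᵥ (A *ᵥ v)) + ∑ i, (N i *ᵥ v) ⬝ᵥ Q *ᵥ (N i *ᵥ v) = -∑ j, (C *ᵥ v) j ^ 2 := by
  have h := congrArg (fun M => v ⬝ᵥ M *ᵥ v) hLyap
  simp only [add_mulVec, neg_mulVec, Matrix.sum_mulVec, ← mulVec_mulVec, dotProduct_add,
    dotProduct_neg, dotProduct_sum, dotProduct_mulVec v, vecMul_transpose] at h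
  rw [← dotProduct_mulVec, hQ.dotProduct_mulVec_comm (A *ᵥ v)] at h
  have hC : C *ᵥ v ⬝ᵥ C *ᵥ v = ∑ j, (C *ᵥ v) j ^ 2 := by simp only [dotProduct, sq]
  linarith

theorem dissipation_le_of_lyapunov_eq (hQ : Q.PosSemidef)
    (hLyap : Aᵀ * Q + Q * A + ∑ i, (N i)ᵀ * Q * N i = -(Cᵀ * C)) (v : n → ℝ) (w : m → ℝ) :
    ∑ j, (C *ᵥ v) j ^ 2 + 2 * (v ⬝ᵥ Q *ᵥ (A *ᵥ v + B *ᵥ w + ∑ i, w i • (N i *ᵥ v))) ≤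
      2 * (v ⬝ᵥ Q *ᵥ (B *ᵥ w)) + (v ⬝ᵥ Q *ᵥ v) * ∑ i, w i ^ 2 := by
  have hAM : ∀ i, 2 * (w i * (v ⬝ᵥ Q *ᵥ (N i *ᵥ v))) ≤
      (N i *ᵥ v) ⬝ᵥ Q *ᵥ (N i *ᵥ v) + w i ^ 2 * (v ⬝ᵥ Q *ᵥ v) := fun i => by
    have h := hQ.two_mul_dotProduct_mulVec_le (N i *ᵥ v) (w i • v)
    rw [mulVec_smul, dotProduct_smul, smul_dotProduct, dotProduct_smul, smul_eq_mul, smul_eq_mul,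
      smul_eq_mul, hQ.isSymm.dotProduct_mulVec_comm (N i *ᵥ v)] at h
    linear_combination h
  have hsum := Finset.sum_le_sum fun i (_ : i ∈ Finset.univ) => hAM i
  have hL := quadForm_of_lyapunov_eq hQ.isSymm hLyap v
  simp only [mulVec_add, mulVec_sum, mulVec_smul, dotProduct_add, dotProduct_sum,
    dotProduct_smul, smul_eq_mul, Finset.sum_add_distrib, ← Finset.mul_sum,
    ← Finset.sum_mul] at hsum ⊢
  linarith

end Lyapunov

theorem stmt_6 {n m p : ℕ} (T : ℝ) (hT : 0 < T)
    (A : Matrix (Fin n) (Fin n) ℝ) (B : Matrix (Fin n) (Fin m) ℝ)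
    (N : Fin m → Matrix (Fin n) (Fin n) ℝ)
    (C : Matrix (Fin p) (Fin n) ℝ)
    (Q₁ : Matrix (Fin n) (Fin n) ℝ) (hQ : Q₁.PosSemidef)
    (hLyap : Aᵀ * Q₁ + Q₁ * A + ∑ i, (N i)ᵀ * Q₁ * N i = -(Cᵀ * C))
    (u : ℝ → Fin m → ℝ) (hu : Continuous u)
    (x₀ : Fin n → ℝ) (x : ℝ → Fin n → ℝ)
    (hx0 : x 0 = x₀)
    (hx : ∀ t ∈ Set.Icc (0 : ℝ) T,
      HasDerivAt x (A *ᵥ x t + B *ᵥ u t + ∑ i, u t i • (N i *ᵥ x t)) t) :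
    (∫ t in (0 : ℝ)..T, ∑ j, ((C *ᵥ x t) j) ^ 2) ≤
      x₀ ⬝ᵥ Q₁ *ᵥ x₀ + 2 * (∫ t in (0 : ℝ)..T, x t ⬝ᵥ Q₁ *ᵥ (B *ᵥ u t)) +
        ∫ t in (0 : ℝ)..T, (x t ⬝ᵥ Q₁ *ᵥ x t) * ∑ i, (u t i) ^ 2 := by
  have hxu : ContinuousOn (fun t => (x t, u t)) (Set.Icc 0 T) :=
    ContinuousOn.prodMk (fun t ht => (hx t ht).continuousAt.continuousWithinAt) hu.continuousOn
  have hint {F : (Fin n → ℝ) × (Fin m → ℝ) → ℝ} (hF : Continuous F) :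
      IntervalIntegrable (fun t => F (x t, u t)) volume 0 T :=
    (hF.comp_continuousOn hxu).intervalIntegrable_of_Icc hT.le
  have hOut : IntervalIntegrable (fun t => ∑ j, (C *ᵥ x t) j ^ 2) volume 0 T :=
    hint (F := fun z => ∑ j, (C *ᵥ z.1) j ^ 2) (by fun_prop)
  have hIn : IntervalIntegrable (fun t => x t ⬝ᵥ Q₁ *ᵥ (B *ᵥ u t)) volume 0 T :=
    hint (F := fun z => z.1 ⬝ᵥ Q₁ *ᵥ (B *ᵥ z.2)) (by fun_prop)
  have hBil : IntervalIntegrable (fun t => (x t ⬝ᵥ Q₁ *ᵥ x t) * ∑ i, u t i ^ 2) volume 0 T :=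
    hint (F := fun z => (z.1 ⬝ᵥ Q₁ *ᵥ z.1) * ∑ i, z.2 i ^ 2) (by fun_prop)
  have h := integral_add_le_of_hasDerivAt hT.le
    (fun t ht => (hx t ht).dotProduct_mulVec_self hQ.isSymm) hOut
    ((hIn.const_mul 2).add hBil) fun t _ => dissipation_le_of_lyapunov_eq hQ hLyap (x t) (u t)
  rw [integral_add (hIn.const_mul 2) hBil, intervalIntegral.integral_const_mul, hx0] at h
  linarith [hQ.dotProduct_mulVec_self_nonneg (x T)]
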